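/- Let μ₁(x,y) = (3/4)(x² - 2x²y² + y²) on [-1,1]². Then ∫_{[-1,1]²} μ₁ = 4/3, and for every line ℓ the integral of μ₁ over ℓ ∩ [-1,1]² with respect to the measure d(|x|+|y|) is at most 1. -/

import Mathlib

/-!
Along the line `y = a x + b` the density `μ₁` is a quartic polynomial in `x`, so every line
integral is an explicit polynomial in `a`, `b` and the endpoints of the chord. The reflection
`x ↦ -x` preserves `μ₁` and reduces the slope to `a ≥ 0`. A chord of nonnegative slope enters
the square through its left side or its bottom and leaves through its right side or its top; in
each case the bound is a polynomial inequality, and the point reflection `(x, y) ↦ (-x, -y)`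
turns the "bottom to right" case into the "left to top" one.
-/

noncomputable def mu1 (p : ℝ × ℝ) : ℝ := 3 / 4 * (p.1 ^ 2 - 2 * p.1 ^ 2 * p.2 ^ 2 + p.2 ^ 2)

open MeasureTheory Set

theorem setIntegral_Icc_eq_sub_of_hasDerivAt {f F : ℝ → ℝ} {u v : ℝ} (huv : u ≤ v)
    (hF : ∀ x, HasDerivAt F (f x) x) (hf : Continuous f) :
    ∫ x in Icc u v, f x = F v - F u := by
  rw [integral_Icc_eq_integral_Ioc, ← intervalIntegral.integral_of_le huv,
    intervalIntegral.integral_eq_sub_of_hasDerivAt (fun x _ ↦ hF x) (hf.intervalIntegrable u v)]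

theorem setIntegral_preimage_neg {E : Type*} [NormedAddCommGroup E] [NormedSpace ℝ E]
    (f : ℝ → E) (s : Set ℝ) : ∫ x in Neg.neg ⁻¹' s, f (-x) = ∫ x in s, f x := by
  have hneg : MeasurableEmbedding (Neg.neg : ℝ → ℝ) := (Homeomorph.neg ℝ).measurableEmbedding
  have h := hneg.setIntegral_map (μ := volume) f s
  rw [Measure.map_neg_eq_self (volume : Measure ℝ)] at h
  exact h.symm

@[fun_prop]
theorem continuous_mu1 : Continuous mu1 := by
  unfold mu1; fun_prop

theorem mu1_swap (x y : ℝ) : mu1 (x, y) = mu1 (y, x) := by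
  simp only [mu1]; ring

theorem mu1_neg_left (x y : ℝ) : mu1 (-x, y) = mu1 (x, y) := by
  simp only [mu1]; ring

noncomputable def mu1LinePrimitive (a b x : ℝ) : ℝ :=
  -(3 / 10) * a ^ 2 * x ^ 5 - 3 / 4 * a * b * x ^ 4 + 1 / 4 * (1 + a ^ 2 - 2 * b ^ 2) * x ^ 3
    + 3 / 4 * a * b * x ^ 2 + 3 / 4 * b ^ 2 * x

section Line

variable (a b : ℝ)

theorem hasDerivAt_mu1LinePrimitive (x : ℝ) :
    HasDerivAt (mu1LinePrimitive a b) (mu1 (x, a * x + b)) x := by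
  have h := (((((hasDerivAt_pow 5 x).const_mul (-(3 / 10) * a ^ 2)).sub
    ((hasDerivAt_pow 4 x).const_mul (3 / 4 * a * b))).add
    ((hasDerivAt_pow 3 x).const_mul (1 / 4 * (1 + a ^ 2 - 2 * b ^ 2)))).add
    ((hasDerivAt_pow 2 x).const_mul (3 / 4 * a * b))).add
    ((hasDerivAt_id x).const_mul (3 / 4 * b ^ 2))
  refine h.congr_deriv ?_
  simp only [mu1]
  push_cast
  ring

theorem integral_mu1_line {u v : ℝ} (huv : u ≤ v) :
    ∫ x in Icc u v, mu1 (x, a * x + b) = mu1LinePrimitive a b v - mu1LinePrimitive a b u :=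
  setIntegral_Icc_eq_sub_of_hasDerivAt huv (hasDerivAt_mu1LinePrimitive a b) (by fun_prop)

theorem mu1LinePrimitive_neg (x : ℝ) :
    mu1LinePrimitive a (-b) (-x) = -mu1LinePrimitive a b x := by
  simp only [mu1LinePrimitive]; ring

end Line

theorem integral_mu1_horizontal (b : ℝ) :
    ∫ x in Icc (-1 : ℝ) 1, mu1 (x, b) = (1 + b ^ 2) / 2 := by
  have h := integral_mu1_line 0 b (show (-1 : ℝ) ≤ 1 by norm_num)
  simp only [zero_mul, zero_add] at h
  rw [h, mu1LinePrimitive, mu1LinePrimitive]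
  ring

theorem integral_mu1_vertical (c : ℝ) :
    ∫ y in Icc (-1 : ℝ) 1, mu1 (c, y) = (1 + c ^ 2) / 2 := by
  simp only [mu1_swap c]
  exact integral_mu1_horizontal c

theorem integral_mu1_square :
    ∫ p in Icc (-1 : ℝ) 1 ×ˢ Icc (-1 : ℝ) 1, mu1 p = 4 / 3 := by
  rw [Measure.volume_eq_prod, setIntegral_prod _
    (continuous_mu1.continuousOn.integrableOn_compact (isCompact_Icc.prod isCompact_Icc))]
  simp only [integral_mu1_vertical]
  rw [setIntegral_Icc_eq_sub_of_hasDerivAt (F := fun x ↦ x / 2 + x ^ 3 / 6) (by norm_num)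
    (fun x ↦ ?_) (by fun_prop)]
  · norm_num
  · refine (((hasDerivAt_id' x).div_const 2).add
      ((hasDerivAt_pow 3 x).div_const 6)).congr_deriv ?_
    push_cast
    ring

theorem mu1_line_mass_le_one_of_crosses_sides {a b : ℝ} (ha : 0 ≤ a) (hb₁ : a - 1 ≤ b)
    (hb₂ : b ≤ 1 - a) :
    (1 + a) * (mu1LinePrimitive a b 1 - mu1LinePrimitive a b (-1)) ≤ 1 := by
  have hmass :
      mu1LinePrimitive a b 1 - mu1LinePrimitive a b (-1) = 1 / 2 - a ^ 2 / 10 + b ^ 2 / 2 := by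
    simp only [mu1LinePrimitive]; ring
  rw [hmass]
  nlinarith [mul_nonneg (by linarith : (0:ℝ) ≤ 1 + a)
      (sub_nonneg.mpr (by nlinarith : b ^ 2 ≤ (1 - a) ^ 2)),
    mul_nonneg (mul_nonneg ha ha) (by linarith : (0:ℝ) ≤ 1 - a), sq_nonneg a]

theorem mu1_line_mass_le_one_of_exits_top {a v : ℝ} (ha : 0 ≤ a) (hv₁ : -1 ≤ v) (hv₂ : v ≤ 1)
    (henter : a * (1 + v) ≤ 2) :
    (1 + a) * (mu1LinePrimitive a (1 - a * v) v - mu1LinePrimitive a (1 - a * v) (-1)) ≤ 1 := by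
  have hp0 : (0:ℝ) ≤ (1 + a) * (1 + v) := mul_nonneg (by linarith) (by linarith)
  have hp4 : (1 + a) * (1 + v) ≤ 4 := by nlinarith
  have hN1 : (0:ℝ) ≤
      ((1 + a) * (1 + v)) * (2 * (a * (1 + v) ^ 2) + 10 - 5 * ((1 + a) * (1 + v))) ^ 2 :=
    mul_nonneg hp0 (sq_nonneg _)
  have hN2 : (0:ℝ) ≤ 5 * ((1 + a) * (1 + v) - 2) ^ 2 * (4 - (1 + a) * (1 + v)) :=
    mul_nonneg (mul_nonneg (by norm_num) (sq_nonneg _)) (by linarith)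
  simp only [mu1LinePrimitive]
  nlinarith [hN1, hN2]

theorem mu1_line_mass_le_one_of_crosses_top_bottom {a b : ℝ} (ha : 0 < a) (hb₁ : 1 - a ≤ b)
    (hb₂ : b ≤ a - 1) :
    (1 + a) * (mu1LinePrimitive a b ((1 - b) / a) - mu1LinePrimitive a b ((-1 - b) / a)) ≤ 1 := by
  have hmass : mu1LinePrimitive a b ((1 - b) / a) - mu1LinePrimitive a b ((-1 - b) / a)
      = (a ^ 2 / 2 + b ^ 2 / 2 - 1 / 10) / a ^ 3 := by
    simp only [mu1LinePrimitive]; field_simp; ring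
  rw [hmass, mul_div_assoc', div_le_one (by positivity)]
  nlinarith [mul_nonneg (by linarith : (0:ℝ) ≤ 1 + a)
      (sub_nonneg.mpr (by nlinarith : b ^ 2 ≤ (a - 1) ^ 2)),
    mul_nonneg ha.le (sq_nonneg (a - 1)), sq_nonneg (a - 1)]

theorem mu1_line_mass_le_one {a b : ℝ} (ha : 0 < a)
    (huv : max (-1) ((-1 - b) / a) ≤ min 1 ((1 - b) / a)) :
    (1 + a) * (mu1LinePrimitive a b (min 1 ((1 - b) / a))
      - mu1LinePrimitive a b (max (-1) ((-1 - b) / a))) ≤ 1 := by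
  rcases le_total ((-1 - b) / a) (-1) with hu | hu <;>
    rcases le_total 1 ((1 - b) / a) with hv | hv
  · rw [max_eq_left hu, min_eq_left hv]
    rw [div_le_iff₀ ha] at hu
    rw [le_div_iff₀ ha] at hv
    exact mu1_line_mass_le_one_of_crosses_sides ha.le (by linarith) (by linarith)
  · rw [max_eq_left hu, min_eq_right hv] at *
    set v := (1 - b) / a with hv_def
    have hb : b = 1 - a * v := by rw [hv_def]; field_simp; ring
    rw [div_le_iff₀ ha] at hu
    rw [hb] at hu ⊢
    exact mu1_line_mass_le_one_of_exits_top ha.le huv hv (by linarith)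
  · rw [max_eq_right hu, min_eq_left hv] at *
    set u := (-1 - b) / a with hu_def
    have hb : -b = 1 - a * -u := by rw [hu_def]; field_simp; ring
    rw [le_div_iff₀ ha] at hv
    have hexit := mu1_line_mass_le_one_of_exits_top ha.le (neg_le_neg huv) (by linarith)
      (show a * (1 + -u) ≤ 2 by nlinarith)
    rw [← hb, mu1LinePrimitive_neg, mu1LinePrimitive_neg] at hexit
    linarith
  · rw [max_eq_right hu, min_eq_right hv]
    rw [le_div_iff₀ ha] at hu
    rw [div_le_iff₀ ha] at hv
    exact mu1_line_mass_le_one_of_crosses_top_bottom ha (by linarith) (by linarith)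

def lineSection (a b : ℝ) : Set ℝ := {x | x ∈ Icc (-1 : ℝ) 1 ∧ a * x + b ∈ Icc (-1 : ℝ) 1}

theorem lineSection_eq_Icc {a : ℝ} (b : ℝ) (ha : 0 < a) :
    lineSection a b = Icc (max (-1) ((-1 - b) / a)) (min 1 ((1 - b) / a)) := by
  ext x
  simp only [lineSection, mem_ofPred_eq, mem_Icc, max_le_iff, le_min_iff, div_le_iff₀ ha,
    le_div_iff₀ ha]
  constructor <;> rintro ⟨⟨h₁, h₂⟩, h₃, h₄⟩ <;>
    exact ⟨⟨by linarith, by linarith⟩, by linarith, by linarith⟩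

theorem lineSection_neg (a b : ℝ) : lineSection a b = Neg.neg ⁻¹' lineSection (-a) b := by
  ext x
  simp only [lineSection, mem_preimage, mem_ofPred_eq, mem_Icc, neg_mul_neg]
  constructor <;> rintro ⟨⟨h₁, h₂⟩, h₃, h₄⟩ <;> exact ⟨⟨by linarith, by linarith⟩, h₃, h₄⟩

theorem integral_lineSection_le_one_of_pos {a : ℝ} (b : ℝ) (ha : 0 < a) :
    ∫ x in lineSection a b, (1 + a) * mu1 (x, a * x + b) ≤ 1 := by
  rw [lineSection_eq_Icc b ha, integral_const_mul]
  rcases le_or_gt (max (-1) ((-1 - b) / a)) (min 1 ((1 - b) / a)) with huv | hvu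
  · rw [integral_mu1_line a b huv]
    exact mu1_line_mass_le_one ha huv
  · rw [Icc_eq_empty hvu.not_ge, setIntegral_empty]
    norm_num

theorem integral_lineSection_le_one (a b : ℝ) :
    ∫ x in lineSection a b, (1 + |a|) * mu1 (x, a * x + b) ≤ 1 := by
  rcases lt_trichotomy a 0 with ha | rfl | ha
  · have hreflect : ∀ x, (1 + |a|) * mu1 (x, a * x + b) = (1 + -a) * mu1 (-x, -a * -x + b) := by
      intro x
      rw [abs_of_neg ha, neg_mul_neg, mu1_neg_left]
    simp only [hreflect]
    rw [lineSection_neg, setIntegral_preimage_neg (fun x ↦ (1 + -a) * mu1 (x, -a * x + b))]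
    exact integral_lineSection_le_one_of_pos b (neg_pos.2 ha)
  · simp only [abs_zero, add_zero, one_mul, zero_mul, zero_add]
    by_cases hb : b ∈ Icc (-1 : ℝ) 1
    · have hsection : lineSection 0 b = Icc (-1) 1 := by ext x; simp [lineSection, hb]
      rw [hsection, integral_mu1_horizontal]
      nlinarith [hb.1, hb.2]
    · have hsection : lineSection 0 b = ∅ := by ext x; simp [lineSection, hb]
      rw [hsection, setIntegral_empty]
      norm_num
  · rw [abs_of_pos ha]
    exact integral_lineSection_le_one_of_pos b ha

/-- `∫ μ₁ = 4/3` and every line integral of `μ₁` w.r.t. `d(|x|+|y|)` is at most 1. -/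
theorem mu1_density_feasible :
    (∫ p in (Set.Icc (-1 : ℝ) 1 ×ˢ Set.Icc (-1 : ℝ) 1), mu1 p = 4 / 3) ∧
    (∀ a b : ℝ,
      ∫ x in {x : ℝ | x ∈ Set.Icc (-1 : ℝ) 1 ∧ a * x + b ∈ Set.Icc (-1 : ℝ) 1},
        (1 + |a|) * mu1 (x, a * x + b) ≤ 1) ∧
    (∀ c ∈ Set.Icc (-1 : ℝ) 1, ∫ y in Set.Icc (-1 : ℝ) 1, mu1 (c, y) ≤ 1) := by
  refine ⟨integral_mu1_square, integral_lineSection_le_one, fun c hc ↦ ?_⟩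
  rw [integral_mu1_vertical]
  nlinarith [hc.1, hc.2]
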